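/- For every real s > 1/2, every integer N ≥ 1 and every index i ∈ {1,…,N} there exists a constant C > 0 such that for all functions v₁, …, v_N : ℤ → [0,∞): ( Σ_{k∈ℤ} ⟨k⟩^{2s} · ( Σ_{k₁+⋯+k_N = k} (max_{1≤j≤N} ⟨k_j⟩)^{-1} · Π_{l=1}^N v_l(k_l) )² )^{1/2} ≤ C · ( Σ_{k∈ℤ} ⟨k⟩^{2(s−1)} v_i(k)² )^{1/2} · Π_{l≠i} ( Σ_{k∈ℤ} ⟨k⟩^{2s} v_l(k)² )^{1/2}, where the inner sum ranges over all N-tuples (k₁,…,k_N) ∈ ℤ^N with k₁+⋯+k_N = k and all sums are interpreted in [0,∞]. -/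

import Mathlib

open scoped ENNReal NNReal BigOperators

/-- The Japanese bracket `⟨k⟩ = (1+k²)^{1/2}`, as an extended nonnegative real. -/
noncomputable def J (k : ℤ) : ℝ≥0∞ := ENNReal.ofReal (Real.sqrt (1 + (k : ℝ) ^ 2))

/-!
Let `M = max_j ⟨k_j⟩` and `m = min s 1`. Since `⟨k_1 + ⋯ + k_N⟩ ≤ N M`, the weight
`⟨k⟩^s M⁻¹` is at most `N^s M^(s-1) ≤ N^s ⟨k_i⟩^(s-1) ∏_{l≠i} ⟨k_l⟩^(s-m)`: for `s ≤ 1` use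
`M ≥ ⟨k_i⟩`, for `s > 1` the factor carrying the largest frequency absorbs `M^(s-1)`. What remains
is the convolution of `⟨·⟩^(s-1) v_i` with the functions `⟨·⟩^(s-m) v_l`, which Young's inequality
`‖f * g‖_{ℓ²} ≤ ‖f‖_{ℓ²} ‖g‖_{ℓ¹}` bounds, and by Cauchy–Schwarz
`‖⟨·⟩^(s-m) v_l‖_{ℓ¹} ≤ ‖⟨·⟩^(-m)‖_{ℓ²} ‖v_l‖_{H^s}`, finite because `2m > 1`.
-/

open Finset

lemma ENNReal.rpow_le_rpow_of_nonpos {x y : ℝ≥0∞} {z : ℝ} (hz : z ≤ 0) (h : x ≤ y) :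
    y ^ z ≤ x ^ z := by
  rw [← neg_neg z, ENNReal.rpow_neg y, ENNReal.rpow_neg x, ENNReal.inv_le_inv]
  exact ENNReal.rpow_le_rpow h (neg_nonneg.mpr hz)

lemma ENNReal.one_le_rpow_of_nonneg {x : ℝ≥0∞} {z : ℝ} (hx : 1 ≤ x) (hz : 0 ≤ z) :
    1 ≤ x ^ z := by
  simpa using ENNReal.rpow_le_rpow_of_exponent_le hx hz

lemma rpow_le_prod_rpow_ite {ι : Type*} [Fintype ι] [DecidableEq ι] {a : ι → ℝ≥0∞}
    (ha : ∀ j, 1 ≤ a j) (i m : ι) (hm : ∀ j, a j ≤ a m) {t σ : ℝ} (hσ : 0 ≤ σ) (htσ : t ≤ σ) :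
    a m ^ t ≤ ∏ l, a l ^ (if l = i then t else σ) := by
  rw [← mul_prod_erase univ _ (mem_univ i), if_pos rfl,
    prod_congr rfl fun l hl => by rw [if_neg (ne_of_mem_erase hl)]]
  have hrest : 1 ≤ ∏ l ∈ univ.erase i, a l ^ σ :=
    one_le_prod' fun l _ => ENNReal.one_le_rpow_of_nonneg (ha l) hσ
  rcases le_or_gt t 0 with ht | ht
  · calc a m ^ t ≤ a i ^ t := ENNReal.rpow_le_rpow_of_nonpos ht (hm i)
      _ ≤ _ := le_mul_of_one_le_right' hrest
  obtain rfl | hmi := eq_or_ne m i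
  · exact le_mul_of_one_le_right' hrest
  calc a m ^ t ≤ a m ^ σ := ENNReal.rpow_le_rpow_of_exponent_le (ha m) htσ
    _ ≤ ∏ l ∈ univ.erase i, a l ^ σ :=
      single_le_prod' (fun l _ => ENNReal.one_le_rpow_of_nonneg (ha l) hσ)
        (mem_erase.mpr ⟨hmi, mem_univ m⟩)
    _ ≤ _ := le_mul_of_one_le_left' (ENNReal.one_le_rpow (ha i) ht)

lemma one_le_J (k : ℤ) : 1 ≤ J k :=
  ENNReal.one_le_ofReal.mpr (Real.one_le_sqrt.mpr (le_add_of_nonneg_right (sq_nonneg _)))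

lemma J_ne_zero (k : ℤ) : J k ≠ 0 := (zero_lt_one.trans_le (one_le_J k)).ne'

lemma J_ne_top (k : ℤ) : J k ≠ ⊤ := ENNReal.ofReal_ne_top

lemma J_le_natCast_mul {k m : ℤ} {n : ℕ} (hn : 1 ≤ n) (h : |k| ≤ n * |m|) :
    J k ≤ n * J m := by
  have hn' : (1 : ℝ) ≤ n := by exact_mod_cast hn
  have h' : |(k : ℝ)| ≤ n * |(m : ℝ)| := by exact_mod_cast h
  rw [J, J, ← ENNReal.ofReal_natCast, ← ENNReal.ofReal_mul (by positivity),
    ← Real.sqrt_sq (by positivity : (0 : ℝ) ≤ n), ← Real.sqrt_mul (by positivity)]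
  gcongr
  nlinarith [sq_abs (k : ℝ), sq_abs (m : ℝ), mul_self_le_mul_self (abs_nonneg _) h']

lemma J_le_J_of_abs_le {k m : ℤ} (h : |k| ≤ |m|) : J k ≤ J m := by
  simpa using J_le_natCast_mul le_rfl (n := 1) (by simpa using h)

lemma J_sum_le_card_mul {ι : Type*} [Fintype ι] (p : ι → ℤ) (m : ι)
    (hm : ∀ j, |p j| ≤ |p m|) :
    J (∑ j, p j) ≤ Fintype.card ι * J (p m) := by
  refine J_le_natCast_mul (Fintype.card_pos_iff.mpr ⟨m⟩) ?_
  calc |∑ j, p j| ≤ ∑ j, |p j| := abs_sum_le_sum_abs _ _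
    _ ≤ ∑ _j : ι, |p m| := sum_le_sum fun j _ => hm j
    _ = _ := by simp

lemma J_sum_rpow_mul_sup_inv_le {ι : Type*} [Fintype ι] [DecidableEq ι] (i : ι) {s σ : ℝ}
    (hs : 0 ≤ s) (hσ : 0 ≤ σ) (hsσ : s - 1 ≤ σ) (p : ι → ℤ) :
    J (∑ j, p j) ^ s * (univ.sup fun j => J (p j)) ^ (-1 : ℝ)
      ≤ (Fintype.card ι : ℝ≥0∞) ^ s * ∏ l, J (p l) ^ (if l = i then s - 1 else σ) := by
  obtain ⟨m, -, hm⟩ := exists_max_image univ (fun j => |p j|) ⟨i, mem_univ i⟩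
  have hsup : (univ.sup fun j => J (p j)) = J (p m) :=
    le_antisymm (Finset.sup_le fun j _ => J_le_J_of_abs_le (hm j (mem_univ j)))
      (Finset.le_sup (f := fun j => J (p j)) (mem_univ m))
  rw [hsup]
  calc J (∑ j, p j) ^ s * J (p m) ^ (-1 : ℝ)
      ≤ (Fintype.card ι * J (p m)) ^ s * J (p m) ^ (-1 : ℝ) := by
        gcongr; exact J_sum_le_card_mul p m fun j => hm j (mem_univ j)
    _ = (Fintype.card ι : ℝ≥0∞) ^ s * J (p m) ^ (s - 1) := by
        rw [ENNReal.mul_rpow_of_nonneg _ _ hs, mul_assoc, sub_eq_add_neg,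
          ENNReal.rpow_add _ _ (J_ne_zero _) (J_ne_top _)]
    _ ≤ _ := by
        gcongr
        exact rpow_le_prod_rpow_ite (fun j => one_le_J _) i m
          (fun j => J_le_J_of_abs_le (hm j (mem_univ j))) hσ (by linarith)

lemma ENNReal.sq_rpow_half (x : ℝ≥0∞) : (x ^ (2 : ℕ)) ^ ((1 : ℝ) / 2) = x := by
  rw [← ENNReal.rpow_natCast, ← ENNReal.rpow_mul]
  norm_num

noncomputable def l2Norm {α : Type*} (u : α → ℝ≥0∞) : ℝ≥0∞ :=
  (∑' k, u k ^ (2 : ℕ)) ^ ((1 : ℝ) / 2)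

section l2Norm

variable {α : Type*}

lemma l2Norm_sq (u : α → ℝ≥0∞) : l2Norm u ^ (2 : ℕ) = ∑' k, u k ^ (2 : ℕ) := by
  rw [l2Norm, ← ENNReal.rpow_natCast, ← ENNReal.rpow_mul]
  norm_num

lemma l2Norm_le_iff {u : α → ℝ≥0∞} {c : ℝ≥0∞} :
    l2Norm u ≤ c ↔ ∑' k, u k ^ (2 : ℕ) ≤ c ^ (2 : ℕ) := by
  rw [← l2Norm_sq, ENNReal.pow_le_pow_left_iff two_ne_zero]

lemma l2Norm_mono {u w : α → ℝ≥0∞} (h : ∀ k, u k ≤ w k) : l2Norm u ≤ l2Norm w := by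
  rw [l2Norm_le_iff, l2Norm_sq]
  exact ENNReal.tsum_le_tsum fun k => by gcongr; exact h k

lemma l2Norm_const_mul (c : ℝ≥0∞) (u : α → ℝ≥0∞) :
    l2Norm (fun k => c * u k) = c * l2Norm u := by
  simp only [l2Norm, mul_pow, ENNReal.tsum_mul_left]
  rw [ENNReal.mul_rpow_of_nonneg _ _ (by norm_num), ENNReal.sq_rpow_half]

lemma tsum_mul_le_l2Norm_mul_l2Norm (f g : α → ℝ≥0∞) :
    ∑' k, f k * g k ≤ l2Norm f * l2Norm g := by
  let _ : MeasurableSpace α := ⊤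
  have := ENNReal.lintegral_mul_le_Lp_mul_Lq MeasureTheory.Measure.count
    Real.HolderConjugate.two_two (measurable_from_top (f := f)).aemeasurable
    (measurable_from_top (f := g)).aemeasurable
  simpa [MeasureTheory.lintegral_count, l2Norm] using this

lemma l2Norm_comp_sub [AddGroup α] (f : α → ℝ≥0∞) (c : α) :
    l2Norm (fun k => f (k - c)) = l2Norm f :=
  congrArg (· ^ _) ((Equiv.subRight c).tsum_eq fun k => f k ^ (2 : ℕ))

end l2Norm

lemma l2Norm_tsum_mul_comp_sub_le {β G : Type*} [AddGroup G] (a : β → ℝ≥0∞) (b : β → G)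
    (f : G → ℝ≥0∞) : l2Norm (fun k => ∑' m, a m * f (k - b m)) ≤ (∑' m, a m) * l2Norm f := by
  have hcorr : ∀ m m', ∑' k, f (k - b m) * f (k - b m') ≤ l2Norm f ^ (2 : ℕ) := fun m m' => by
    simpa only [l2Norm_comp_sub, sq] using
      tsum_mul_le_l2Norm_mul_l2Norm (fun k => f (k - b m)) (fun k => f (k - b m'))
  rw [l2Norm_le_iff]
  calc ∑' k, (∑' m, a m * f (k - b m)) ^ (2 : ℕ)
      = ∑' m, ∑' m', a m * a m' * ∑' k, f (k - b m) * f (k - b m') := by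
        simp_rw [sq, ← ENNReal.tsum_mul_right, ← ENNReal.tsum_mul_left]
        rw [ENNReal.tsum_comm]
        refine tsum_congr fun m => ?_
        rw [ENNReal.tsum_comm]
        refine tsum_congr fun m' => tsum_congr fun k => by ring
    _ ≤ ∑' m, ∑' m', a m * a m' * l2Norm f ^ (2 : ℕ) := by gcongr with m m'; exact hcorr m m'
    _ = ((∑' m, a m) * l2Norm f) ^ (2 : ℕ) := by
        simp_rw [ENNReal.tsum_mul_right, ENNReal.tsum_mul_left, ENNReal.tsum_mul_right]
        ring

lemma ENNReal.tsum_pi_fin_prod {α : Type*} :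
    ∀ (n : ℕ) (f : Fin n → α → ℝ≥0∞), ∑' g : Fin n → α, ∏ j, f j (g j) = ∏ j, ∑' a, f j a
  | 0, f => by simp
  | n + 1, f => by
    rw [← (Fin.consEquiv fun _ => α).tsum_eq, ENNReal.tsum_prod', Fin.prod_univ_succ,
      ← ENNReal.tsum_pi_fin_prod n, ← ENNReal.tsum_mul_right]
    refine tsum_congr fun a => ?_
    rw [← ENNReal.tsum_mul_left]
    refine tsum_congr fun g => ?_
    simp [Fin.prod_univ_succ, Fin.consEquiv]

lemma ENNReal.tsum_pi_prod {ι α : Type*} [Fintype ι] (f : ι → α → ℝ≥0∞) :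
    ∑' g : ι → α, ∏ j, f j (g j) = ∏ j, ∑' a, f j a := by
  let e := Fintype.equivFin ι
  rw [← (e.arrowCongr (Equiv.refl α)).symm.tsum_eq, ← e.symm.prod_comp,
    ← ENNReal.tsum_pi_fin_prod]
  refine tsum_congr fun g => ?_
  rw [← e.symm.prod_comp]
  simp

noncomputable def multiConv {ι : Type*} [Fintype ι] (K : (ι → ℤ) → ℝ≥0∞)
    (u : ι → ℤ → ℝ≥0∞) (k : ℤ) : ℝ≥0∞ :=
  ∑' p : ι → ℤ, if (∑ j, p j) = k then K p * ∏ l, u l (p l) else 0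

section multiConv

variable {ι : Type*} [Fintype ι]

lemma J_rpow_mul_multiConv_le {K : (ι → ℤ) → ℝ≥0∞} {w : ι → ℤ → ℝ≥0∞} {c : ℝ≥0∞} {t : ℝ}
    (hK : ∀ p, J (∑ j, p j) ^ t * K p ≤ c * ∏ l, w l (p l)) (u : ι → ℤ → ℝ≥0∞) (k : ℤ) :
    J k ^ t * multiConv K u k ≤ c * multiConv 1 (fun l k => w l k * u l k) k := by
  simp only [multiConv, ← ENNReal.tsum_mul_left]
  refine ENNReal.tsum_le_tsum fun p => ?_
  split_ifs with hp
  · subst hp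
    calc J (∑ j, p j) ^ t * (K p * ∏ l, u l (p l))
        = J (∑ j, p j) ^ t * K p * ∏ l, u l (p l) := (mul_assoc _ _ _).symm
      _ ≤ c * (∏ l, w l (p l)) * ∏ l, u l (p l) := by gcongr ?_ * _; exact hK p
      _ = c * ((1 : (ι → ℤ) → ℝ≥0∞) p * ∏ l, w l (p l) * u l (p l)) := by
        rw [Pi.one_apply, one_mul, prod_mul_distrib, mul_assoc]
  · simp

variable [DecidableEq ι]

lemma multiConv_one_eq_tsum (i : ι) (u : ι → ℤ → ℝ≥0∞) (k : ℤ) :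
    multiConv 1 u k = ∑' r : {j // j ≠ i} → ℤ, (∏ j, u j.1 (r j)) * u i (k - ∑ j, r j) := by
  rw [multiConv, ← (Equiv.funSplitAt i ℤ).symm.tsum_eq, ENNReal.tsum_prod', ENNReal.tsum_comm]
  refine tsum_congr fun r => ?_
  have hne (j : {j // j ≠ i}) : (j.1 = i) = False := eq_false j.2
  simp only [Fintype.sum_eq_add_sum_subtype_ne _ i, Fintype.prod_eq_mul_prod_subtype_ne _ i,
    Equiv.funSplitAt_symm_apply, dite_true, hne, dite_false, ← eq_sub_iff_add_eq, Pi.one_apply,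
    one_mul, tsum_ite_eq, mul_comm]

lemma l2Norm_multiConv_one_le (i : ι) (u : ι → ℤ → ℝ≥0∞) :
    l2Norm (multiConv 1 u) ≤ (∏ l ∈ univ.erase i, ∑' k, u l k) * l2Norm (u i) := by
  have hprod : ∏ l ∈ univ.erase i, ∑' k, u l k = ∑' r : {j // j ≠ i} → ℤ, ∏ j, u j.1 (r j) := by
    rw [ENNReal.tsum_pi_prod, prod_subtype (p := (· ≠ i)) _ fun j => by simp]
  rw [hprod, funext (multiConv_one_eq_tsum i u)]
  exact (l2Norm_tsum_mul_comp_sub_le (fun r : {j // j ≠ i} → ℤ => ∏ j, u j.1 (r j))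
    (fun r => ∑ j, r j) (u i) :)


end multiConv

lemma tsum_J_rpow_neg_ne_top {t : ℝ} (ht : 1 < t) : ∑' k, J k ^ (-t) ≠ ⊤ := by
  have hsum : Summable fun k : ℤ => Real.sqrt (1 + (k : ℝ) ^ 2) ^ (-t) := by
    refine (Real.summable_abs_int_rpow ht).of_norm_bounded_eventually ?_
    filter_upwards [Filter.eventually_cofinite_ne 0] with k hk
    have hk' : 0 < |(k : ℝ)| := abs_pos.mpr (Int.cast_ne_zero.mpr hk)
    rw [Real.norm_of_nonneg (by positivity)]
    refine Real.rpow_le_rpow_of_nonpos hk' ?_ (by linarith)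
    rw [← Real.sqrt_sq_eq_abs]
    exact Real.sqrt_le_sqrt (by linarith)
  have hJ (k : ℤ) : J k ^ (-t) = ENNReal.ofReal (Real.sqrt (1 + (k : ℝ) ^ 2) ^ (-t)) :=
    ENNReal.ofReal_rpow_of_pos (by positivity)
  rw [tsum_congr hJ, ← ENNReal.ofReal_tsum_of_nonneg (fun _ => by positivity) hsum]
  exact ENNReal.ofReal_ne_top

lemma l2Norm_J_rpow_neg_ne_top {m : ℝ} (hm : 1 / 2 < m) : l2Norm (fun k => J k ^ (-m)) ≠ ⊤ := by
  have hsq (k : ℤ) : (J k ^ (-m)) ^ (2 : ℕ) = J k ^ (-(2 * m)) := by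
    rw [← ENNReal.rpow_mul_natCast]; ring_nf
  refine ENNReal.rpow_ne_top_of_nonneg (by norm_num) ?_
  simpa only [hsq] using tsum_J_rpow_neg_ne_top (t := 2 * m) (by linarith)

noncomputable def sobolevNorm (t : ℝ) (u : ℤ → ℝ≥0∞) : ℝ≥0∞ :=
  (∑' k : ℤ, J k ^ (2 * t) * u k ^ (2 : ℕ)) ^ ((1 : ℝ) / 2)

lemma sobolevNorm_eq_l2Norm (t : ℝ) (u : ℤ → ℝ≥0∞) :
    sobolevNorm t u = l2Norm (fun k => J k ^ t * u k) := by
  simp_rw [sobolevNorm, l2Norm, mul_pow, ← ENNReal.rpow_mul_natCast, Nat.cast_ofNat, mul_comm t]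

theorem sobolevNorm_multiConv_sup_inv_le {ι : Type*} [Fintype ι] [DecidableEq ι] (i : ι) {s : ℝ}
    (hs : 1 / 2 < s) (u : ι → ℤ → ℝ≥0∞) :
    sobolevNorm s (multiConv (fun p => (univ.sup fun j => J (p j)) ^ (-1 : ℝ)) u)
      ≤ (Fintype.card ι : ℝ≥0∞) ^ s *
          l2Norm (fun k => J k ^ (-min s 1)) ^ (Fintype.card ι - 1) *
        (sobolevNorm (s - 1) (u i) * ∏ l ∈ univ.erase i, sobolevNorm s (u l)) := by
  set m := min s 1
  set w : ι → ℤ → ℝ≥0∞ := fun l k => J k ^ (if l = i then s - 1 else s - m)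
  have hkernel := J_sum_rpow_mul_sup_inv_le i (s := s) (σ := s - m) (by linarith)
    (sub_nonneg.mpr (min_le_left s 1)) (by linarith [min_le_right s 1])
  have hwi : l2Norm (fun k => w i k * u i k) = sobolevNorm (s - 1) (u i) := by
    simp [w, sobolevNorm_eq_l2Norm]
  have hwl : ∀ l ∈ univ.erase i,
      ∑' k, w l k * u l k ≤ l2Norm (fun k => J k ^ (-m)) * sobolevNorm s (u l) := by
    intro l hl
    have hsplit (k : ℤ) : w l k * u l k = J k ^ (-m) * (J k ^ s * u l k) := by
      rw [← mul_assoc, ← ENNReal.rpow_add _ _ (J_ne_zero k) (J_ne_top k), neg_add_eq_sub]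
      simp only [w, if_neg (ne_of_mem_erase hl)]
    rw [tsum_congr hsplit, sobolevNorm_eq_l2Norm]
    exact tsum_mul_le_l2Norm_mul_l2Norm _ _
  calc sobolevNorm s (multiConv _ u)
      = l2Norm (fun k => J k ^ s * multiConv _ u k) := sobolevNorm_eq_l2Norm _ _
    _ ≤ l2Norm fun k =>
          (Fintype.card ι : ℝ≥0∞) ^ s * multiConv 1 (fun l k => w l k * u l k) k :=
      l2Norm_mono (J_rpow_mul_multiConv_le (w := w) hkernel u)
    _ = (Fintype.card ι : ℝ≥0∞) ^ s * l2Norm (multiConv 1 fun l k => w l k * u l k) :=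
      l2Norm_const_mul _ _
    _ ≤ (Fintype.card ι : ℝ≥0∞) ^ s *
        ((∏ l ∈ univ.erase i, ∑' k, w l k * u l k) * l2Norm (fun k => w i k * u i k)) := by
      gcongr; exact l2Norm_multiConv_one_le i _
    _ ≤ (Fintype.card ι : ℝ≥0∞) ^ s *
        ((∏ l ∈ univ.erase i, l2Norm (fun k => J k ^ (-m)) * sobolevNorm s (u l)) *
          sobolevNorm (s - 1) (u i)) := by
      rw [hwi]; gcongr with l hl; exact hwl l hl
    _ = _ := by
      rw [prod_mul_distrib, prod_const, card_erase_of_mem (mem_univ i), card_univ]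
      ring

theorem multilinear_one_gain_estimate_general (s : ℝ) (hs : 1 / 2 < s) (N : ℕ)
    (i : Fin N) :
    ∃ C : ℝ, 0 < C ∧ ∀ v : Fin N → ℤ → ℝ≥0,
      (∑' k : ℤ, J k ^ (2 * s) *
          (∑' p : Fin N → ℤ, if (∑ j, p j) = k then
              (Finset.univ.sup fun j => J (p j)) ^ (-1 : ℝ) * ∏ l, (v l (p l) : ℝ≥0∞)
            else 0) ^ (2 : ℕ)) ^ ((1 : ℝ) / 2)
      ≤ ENNReal.ofReal C *
          ((∑' k : ℤ, J k ^ (2 * (s - 1)) * (v i k : ℝ≥0∞) ^ (2 : ℕ)) ^ ((1 : ℝ) / 2) *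
            ∏ l ∈ Finset.univ.erase i,
              (∑' k : ℤ, J k ^ (2 * s) * (v l k : ℝ≥0∞) ^ (2 : ℕ)) ^ ((1 : ℝ) / 2)) := by
  set K : ℝ≥0∞ := (N : ℝ≥0∞) ^ s * l2Norm (fun k => J k ^ (-min s 1)) ^ (N - 1)
  have hK : K ≠ ⊤ := ENNReal.mul_ne_top (ENNReal.rpow_ne_top_of_nonneg (by linarith) (by simp))
    (ENNReal.pow_ne_top (l2Norm_J_rpow_neg_ne_top (lt_min hs (by norm_num))))
  refine ⟨K.toReal + 1, by positivity, fun v => ?_⟩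
  have hKC : K ≤ ENNReal.ofReal (K.toReal + 1) :=
    (ENNReal.le_ofReal_iff_toReal_le hK (by positivity)).mpr (by linarith)
  have h := sobolevNorm_multiConv_sup_inv_le i hs fun l k => (v l k : ℝ≥0∞)
  rw [Fintype.card_fin] at h
  -- `h` is the goal with `sobolevNorm` and `multiConv` unfolded
  exact h.trans (mul_le_mul_left hKC _)

/-- Multilinear estimate: the `⟨k_max⟩⁻¹`-weighted convolution is bounded in `l²_s`
by `‖v_i‖_{H^{s-1}}` times the `H^s` norms of the other factors, for `s > 1/2`. -/
theorem multilinear_one_gain_estimate (s : ℝ) (hs : 1 / 2 < s) (N : ℕ) (hN : 1 ≤ N)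
    (i : Fin N) :
    ∃ C : ℝ, 0 < C ∧ ∀ v : Fin N → ℤ → ℝ≥0,
      (∑' k : ℤ, J k ^ (2 * s) *
          (∑' p : Fin N → ℤ, if (∑ j, p j) = k then
              (Finset.univ.sup fun j => J (p j)) ^ (-1 : ℝ) * ∏ l, (v l (p l) : ℝ≥0∞)
            else 0) ^ (2 : ℕ)) ^ ((1 : ℝ) / 2)
      ≤ ENNReal.ofReal C *
          ((∑' k : ℤ, J k ^ (2 * (s - 1)) * (v i k : ℝ≥0∞) ^ (2 : ℕ)) ^ ((1 : ℝ) / 2) *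
            ∏ l ∈ Finset.univ.erase i,
              (∑' k : ℤ, J k ^ (2 * s) * (v l k : ℝ≥0∞) ^ (2 : ℕ)) ^ ((1 : ℝ) / 2)) :=
  multilinear_one_gain_estimate_general s hs N i
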